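/- As z → 0⁺, K(z) = 96 z⁵ + O(z⁶), i.e., there exist ε > 0 and M > 0 such that for all 0 < z < ε, |K(z) − 96z⁵| ≤ M z⁶. -/
import Mathlib

open MeasureTheory Real Set

noncomputable def Kfun (z : ℝ) : ℝ :=
  ∫ x in Set.Ici (2/z), Real.exp (-(x - 2/z)) * (1/x^2) * (z^2 * x^2 - 4) ^ (3:ℕ)

lemma moment_integrable (n : ℕ) :
    IntegrableOn (fun t : ℝ => Real.exp (-t) * t ^ n) (Set.Ioi 0) := by
  have h := Real.GammaIntegral_convergent (s := (n:ℝ)+1) (by positivity)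
  refine h.congr_fun ?_ measurableSet_Ioi
  intro x hx
  simp [Real.rpow_natCast]

lemma moment_val (n : ℕ) :
    ∫ t in Set.Ioi (0:ℝ), Real.exp (-t) * t ^ n = ((Nat.factorial n : ℕ) : ℝ) := by
  have h1 : Real.Gamma ((n:ℝ)+1) = Nat.factorial n := Real.Gamma_nat_eq_factorial n
  have h2 := Real.Gamma_eq_integral (s := (n:ℝ)+1) (by positivity)
  rw [h2] at h1
  rw [← h1]
  refine setIntegral_congr_fun measurableSet_Ioi fun x hx => ?_
  simp [Real.rpow_natCast]

lemma shift_Ici (f : ℝ → ℝ) (a : ℝ) :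
    ∫ x in Set.Ici a, f x = ∫ t in Set.Ici 0, f (t + a) := by
  rw [← integral_indicator measurableSet_Ici, ← integral_indicator measurableSet_Ici,
      ← integral_add_right_eq_self (fun x => (Set.Ici a).indicator f x) a]
  congr 1; ext t
  by_cases h : 0 ≤ t
  · rw [Set.indicator_of_mem (by simpa using h), Set.indicator_of_mem (by simpa using h)]
  · rw [Set.indicator_of_notMem (by simpa using h),
      Set.indicator_of_notMem (by simpa using h)]

lemma core_bound (s : ℝ) (hs : 0 ≤ s) : |(4+s)^3/(2+s)^2 - 16| ≤ 4*s := by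
  have hB : (0:ℝ) < (2+s)^2 := by positivity
  have h : (4+s)^3/(2+s)^2 - 16 = ((4+s)^3 - 16*(2+s)^2)/(2+s)^2 := by field_simp
  rw [h, abs_div, abs_of_pos hB, div_le_iff₀ hB, abs_le]
  constructor <;> nlinarith [sq_nonneg s, sq_nonneg (s*s)]

theorem stmt7 :
    ∃ ε > (0:ℝ), ∃ M > (0:ℝ), ∀ z : ℝ, 0 < z → z < ε →
      |Kfun z - 96 * z^5| ≤ M * z^6 := by
  refine ⟨1, one_pos, 96, by norm_num, fun z hz _ => ?_⟩
  have hz' : z ≠ 0 := hz.ne'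
  set a : ℝ := 2/z with ha
  have ha0 : 0 < a := by positivity
  set F : ℝ → ℝ := fun t => Real.exp (-t) * (z^5*t^3*(4+z*t)^3/(2+z*t)^2) with hF
  set G : ℝ → ℝ := fun t => Real.exp (-t) * (16*z^5*t^3) with hG
  set H : ℝ → ℝ := fun t => Real.exp (-t) * (4*z^6*t^4) with hH
  -- Step 1: Kfun z = ∫ F over Ici 0
  have hKF : Kfun z = ∫ t in Set.Ici (0:ℝ), F t := by
    rw [Kfun, shift_Ici (fun x => Real.exp (-(x - 2/z)) * (1/x^2) * (z^2 * x^2 - 4) ^ (3:ℕ)) (2/z)]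
    refine setIntegral_congr_fun measurableSet_Ici fun t ht => ?_
    have ht0 : (0:ℝ) ≤ t := ht
    have h1 : 0 < t + 2/z := by positivity
    have h2 : (0:ℝ) < 2 + z*t := by positivity
    have he : -(t + 2/z - 2/z) = -t := by ring
    simp only [hF, he]
    rw [mul_assoc]
    congr 1
    field_simp
    ring
  -- Integrability facts
  have hmono : ∀ n : ℕ, ∀ c : ℝ, IntegrableOn (fun t : ℝ => Real.exp (-t) * (c * t ^ n))
      (Set.Ici 0) := by
    intro n c
    rw [integrableOn_Ici_iff_integrableOn_Ioi]
    have h2 : IntegrableOn (fun t : ℝ => c * (Real.exp (-t) * t ^ n)) (Set.Ioi 0) :=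
      (moment_integrable n).const_mul c
    refine h2.congr_fun (fun x hx => by ring) measurableSet_Ioi
  have hG_int : IntegrableOn G (Set.Ici 0) := hmono 3 (16*z^5)
  have hH_int : IntegrableOn H (Set.Ici 0) := hmono 4 (4*z^6)
  -- Pointwise bound
  have hbnd : ∀ t ∈ Set.Ici (0:ℝ), |F t - G t| ≤ H t := by
    intro t ht
    have ht0 : (0:ℝ) ≤ t := ht
    have hFG : F t - G t = Real.exp (-t) * (z^5*t^3) * ((4+z*t)^3/(2+z*t)^2 - 16) := by
      simp only [hF, hG]; ring
    have hnn : (0:ℝ) ≤ Real.exp (-t) * (z^5*t^3) := by positivity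
    calc |F t - G t| = Real.exp (-t) * (z^5*t^3) * |(4+z*t)^3/(2+z*t)^2 - 16| := by
          rw [hFG, abs_mul, abs_of_nonneg hnn]
      _ ≤ Real.exp (-t) * (z^5*t^3) * (4*(z*t)) :=
          mul_le_mul_of_nonneg_left (core_bound (z*t) (by positivity)) hnn
      _ = H t := by simp only [hH]; ring
  have hmeas : AEStronglyMeasurable (fun t => F t - G t) (volume.restrict (Set.Ici (0:ℝ))) := by
    apply Measurable.aestronglyMeasurable
    simp only [hF, hG]
    fun_prop
  have haebnd : ∀ᵐ t ∂(volume.restrict (Set.Ici (0:ℝ))), ‖F t - G t‖ ≤ H t := by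
    refine (ae_restrict_iff' measurableSet_Ici).2 (ae_of_all _ fun t ht => ?_)
    simpa [Real.norm_eq_abs] using hbnd t ht
  have hFG_int : IntegrableOn (fun t => F t - G t) (Set.Ici 0) :=
    Integrable.mono' hH_int hmeas haebnd
  have hF_int : IntegrableOn F (Set.Ici 0) := by
    have h2 : IntegrableOn (fun t => (F t - G t) + G t) (Set.Ici 0) := hFG_int.add hG_int
    refine h2.congr_fun (fun x _ => by ring) measurableSet_Ici
  -- values of ∫ G and ∫ H
  have hGval : ∫ t in Set.Ici (0:ℝ), G t = 96 * z^5 := by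
    rw [show (∫ t in Set.Ici (0:ℝ), G t) = ∫ t in Set.Ici (0:ℝ), (16*z^5) * (Real.exp (-t) * t^3)
        from setIntegral_congr_fun measurableSet_Ici fun t _ => by simp only [hG]; ring,
      integral_const_mul, integral_Ici_eq_integral_Ioi, moment_val 3]
    norm_num [Nat.factorial]
    ring
  have hHval : ∫ t in Set.Ici (0:ℝ), H t = 96 * z^6 := by
    rw [show (∫ t in Set.Ici (0:ℝ), H t) = ∫ t in Set.Ici (0:ℝ), (4*z^6) * (Real.exp (-t) * t^4)
        from setIntegral_congr_fun measurableSet_Ici fun t _ => by simp only [hH]; ring,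
      integral_const_mul, integral_Ici_eq_integral_Ioi, moment_val 4]
    norm_num [Nat.factorial]
    ring
  have hdiff : Kfun z - 96 * z^5 = ∫ t in Set.Ici (0:ℝ), (F t - G t) := by
    rw [integral_sub hF_int hG_int, hKF, hGval]
  rw [hdiff]
  calc |∫ t in Set.Ici (0:ℝ), (F t - G t)| ≤ ∫ t in Set.Ici (0:ℝ), H t := by
        simpa [Real.norm_eq_abs] using
          norm_integral_le_of_norm_le (μ := volume.restrict (Set.Ici (0:ℝ))) hH_int haebnd
    _ = 96 * z^6 := hHval
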